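/- Let f₁, ..., f_m : 2^V → ℝ≥0 be monotone submodular, and let S₁, ..., S_m ⊆ V be the sets produced by running greedy on each fᵢ separately for k-l rounds (each Sᵢ has size k-l). Then for every collection of sets S_tr* of size l and S₁*, ..., S_m* of size k-l, Σᵢ fᵢ(S_tr* ∪ Sᵢ*) - Σᵢ fᵢ(Sᵢ) ≤ Σᵢ fᵢ(S_tr* ∪ Sᵢ). -/

import Mathlib

/-!
Fix `i` and write `G₀ ⊆ G₁ ⊆ ⋯ ⊆ Gₙ` for the greedy chain of `fᵢ`, `T = S_tr*` and `O = Sᵢ*`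
with `|O| = n`. Adding the elements `o₁, …, oₙ` of `O` one at a time to `T ∪ Gₙ`, the gain of
`oⱼ₊₁` is at most its gain over the smaller set `Gⱼ` (submodularity), which is at most the greedy
gain `f(Gⱼ₊₁) - f(Gⱼ)`. The gains telescope, so
`fᵢ(T ∪ O) ≤ fᵢ(T ∪ Gₙ ∪ O) ≤ fᵢ(T ∪ Gₙ) + fᵢ(Gₙ) - fᵢ(G₀)`, and `fᵢ(G₀) ≥ 0`. Sum over `i`.
-/

open Finset

def Submodular {V : Type*} [DecidableEq V] (f : Finset V → ℝ) : Prop :=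
  ∀ A B : Finset V, f (A ∪ B) + f (A ∩ B) ≤ f A + f B

def MonotoneSet {V : Type*} (f : Finset V → ℝ) : Prop :=
  ∀ A B : Finset V, A ⊆ B → f A ≤ f B

section Greedy

variable {V : Type*} [DecidableEq V] {f : Finset V → ℝ}

theorem Submodular.marginal_le_of_subset (hs : Submodular f) (hm : MonotoneSet f)
    {A B : Finset V} (hBA : B ⊆ A) (e : V) :
    f (insert e A) - f A ≤ f (insert e B) - f B := by
  by_cases he : e ∈ A
  · rw [insert_eq_self.2 he, sub_self, sub_nonneg]
    exact hm _ _ (subset_insert e B)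
  · have hunion : insert e B ∪ A = insert e A := by
      rw [insert_union, union_eq_right.2 hBA]
    have hinter : insert e B ∩ A = B := by
      rw [insert_inter_of_notMem he, inter_eq_left.2 hBA]
    have := hs (insert e B) A
    rw [hunion, hinter] at this
    linarith

def IsGreedyChain (f : Finset V → ℝ) (G : ℕ → Finset V) (n : ℕ) : Prop :=
  ∀ t < n, ∃ e, G (t + 1) = insert e (G t) ∧ ∀ e', f (insert e' (G t)) ≤ f (G (t + 1))

namespace IsGreedyChain

variable {G : ℕ → Finset V} {n : ℕ}

theorem subset (hG : IsGreedyChain f G n) {t : ℕ} (ht : t ≤ n) : G t ⊆ G n := by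
  refine monotoneOn_of_le_succ Set.ordConnected_Iic (fun t _ _ ht' => ?_)
    (Set.mem_Iic.2 ht) (Set.mem_Iic.2 le_rfl) ht
  rw [Order.succ_eq_add_one] at ht' ⊢
  obtain ⟨e, hstep, -⟩ := hG t (Set.mem_Iic.1 ht')
  exact hstep ▸ subset_insert e (G t)

theorem apply_union_le (hG : IsGreedyChain f G n) (hs : Submodular f) (hm : MonotoneSet f)
    {A : Finset V} (hA : G n ⊆ A) {O : Finset V} (hO : O.card ≤ n) :
    f (A ∪ O) ≤ f A + (f (G O.card) - f (G 0)) := by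
  induction O using Finset.induction_on with
  | empty => simp
  | insert a O ha ih =>
    rw [card_insert_of_notMem ha] at hO ⊢
    have hlt : O.card < n := hO
    obtain ⟨e, -, hgreedy⟩ := hG O.card hlt
    have hgain := hs.marginal_le_of_subset hm
      (((hG.subset hlt.le).trans hA).trans (subset_union_left (s₂ := O))) a
    rw [union_insert]
    linarith [ih hlt.le, hgreedy a]

theorem apply_union_sub_le (hG : IsGreedyChain f G n) (hs : Submodular f) (hm : MonotoneSet f)
    (h0 : 0 ≤ f (G 0)) (T : Finset V) {O : Finset V} (hO : O.card = n) :
    f (T ∪ O) - f (G n) ≤ f (T ∪ G n) := by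
  have htelescope := hG.apply_union_le hs hm (A := T ∪ G n) subset_union_right hO.le
  have hmono : f (T ∪ O) ≤ f (T ∪ G n ∪ O) :=
    hm _ _ (union_subset_union subset_union_left le_rfl)
  rw [hO] at htelescope
  linarith

end IsGreedyChain

end Greedy

theorem separate_greedy_coupling_general {V : Type*} [DecidableEq V]
    (m k l : ℕ)
    (f : Fin m → Finset V → ℝ)
    (hnonneg : ∀ i S, 0 ≤ f i S)
    (hsub : ∀ i, Submodular (f i)) (hmono : ∀ i, MonotoneSet (f i))
    (S : Fin m → ℕ → Finset V)
    (hSStep : ∀ i, ∀ t < k - l, ∃ e, e ∉ S i t ∧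
      S i (t + 1) = insert e (S i t) ∧
      ∀ e', f i (insert e' (S i t)) - f i (S i t) ≤
        f i (insert e (S i t)) - f i (S i t))
    (Strstar : Finset V)
    (Sistar : Fin m → Finset V) (hSi : ∀ i, (Sistar i).card = k - l) :
    (∑ i, f i (Strstar ∪ Sistar i)) - (∑ i, f i (S i (k - l))) ≤
      ∑ i, f i (Strstar ∪ S i (k - l)) := by
  have hgreedy (i : Fin m) : IsGreedyChain (f i) (S i) (k - l) := fun t ht => by
    obtain ⟨e, -, hstep, hmax⟩ := hSStep i t ht
    exact ⟨e, hstep, fun e' => by rw [hstep]; linarith [hmax e']⟩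
  rw [← sum_sub_distrib]
  exact sum_le_sum fun i _ =>
    (hgreedy i).apply_union_sub_le (hsub i) (hmono i) (hnonneg i _) Strstar (hSi i)

/-- inequality (17) of the paper: exchange bound for the sets
built by running greedy separately on each `fᵢ` for `k - l` rounds. -/
theorem separate_greedy_coupling {V : Type*} [Fintype V] [DecidableEq V]
    (m k l : ℕ) (hlk : l ≤ k)
    (f : Fin m → Finset V → ℝ)
    (hnonneg : ∀ i S, 0 ≤ f i S)
    (hsub : ∀ i, Submodular (f i)) (hmono : ∀ i, MonotoneSet (f i))
    (S : Fin m → ℕ → Finset V) (hS0 : ∀ i, S i 0 = ∅)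
    (hSStep : ∀ i, ∀ t < k - l, ∃ e, e ∉ S i t ∧
      S i (t + 1) = insert e (S i t) ∧
      ∀ e', f i (insert e' (S i t)) - f i (S i t) ≤
        f i (insert e (S i t)) - f i (S i t))
    (hScard : ∀ i, (S i (k - l)).card = k - l)
    (Strstar : Finset V) (hStr : Strstar.card = l)
    (Sistar : Fin m → Finset V) (hSi : ∀ i, (Sistar i).card = k - l) :
    (∑ i, f i (Strstar ∪ Sistar i)) - (∑ i, f i (S i (k - l))) ≤
      ∑ i, f i (Strstar ∪ S i (k - l)) :=
  separate_greedy_coupling_general m k l f hnonneg hsub hmono S hSStep Strstar Sistar hSi
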